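/- arXiv:1611.07843 — 5 statements merged into one kernel-verified Lean document; each statement's English description precedes it below -/
import Mathlib

section
/- The functions a(t) = (1/(2γ))(log(g(t)/g(T)) − (T−t)g(T)) and b(t) = (1/(γσ²))(T−t)g(T)/g(t) are C¹ on [0,T] and satisfy the system of ODEs a′(t) + (1/2)σ²g(t)²b(t) = 0 and b′(t) + 1/(γσ²) − 2g(t)b(t) = 0 on [0,T], with terminal conditions a(T) = 0 and b(T) = 0. -/
/-!
The key fact is that `g` solves the Riccati equation `g' = -g²` (equivalently `1/g` is affine with
slope one), so that `g t - g T = (T - t) g(t) g(T)`. Differentiating `a` and `b` produces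
`(g T - g t) / (2γ)` and `(T - t - 1/g t) g(T) / (γσ²)`, and this identity turns them into the
right-hand sides of the ODE system.
-/

noncomputable section

open Set

lemma hasDerivAt_div_affine {p q t : ℝ} (h : p + q * t ≠ 0) :
    HasDerivAt (fun s => q / (p + q * s)) (-(q / (p + q * t)) ^ 2) t := by
  have hlin : HasDerivAt (fun s => p + q * s) q t := by
    simpa using ((hasDerivAt_id t).const_mul q).const_add p
  refine ((hasDerivAt_const t q).fun_div hlin h).congr_deriv ?_
  field_simp
  ring

lemma div_affine_sub_div_affine {p q t T : ℝ} (ht : p + q * t ≠ 0) (hT : p + q * T ≠ 0) :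
    q / (p + q * t) - q / (p + q * T) = (T - t) * (q / (p + q * t)) * (q / (p + q * T)) := by
  field_simp
  ring

section Riccati

variable {g : ℝ → ℝ} {t : ℝ}

lemma hasDerivAt_log_div_const_of_riccati (hg : HasDerivAt g (-g t ^ 2) t) (ht : g t ≠ 0)
    {c : ℝ} (hc : c ≠ 0) : HasDerivAt (fun s => Real.log (g s / c)) (-g t) t := by
  refine ((hg.div_const c).log (div_ne_zero ht hc)).congr_deriv ?_
  field_simp

lemma hasDerivAt_sub_div_of_riccati (hg : HasDerivAt g (-g t ^ 2) t) (ht : g t ≠ 0) (T : ℝ) :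
    HasDerivAt (fun s => (T - s) / g s) (T - t - 1 / g t) t := by
  refine (((hasDerivAt_id' t).const_sub T).fun_div hg ht).congr_deriv ?_
  field_simp
  ring

variable {T : ℝ} (hg : HasDerivAt g (-g t ^ 2) t) (ht : g t ≠ 0)
  (hrel : g t - g T = (T - t) * g t * g T)
include hg ht hrel

lemma hasDerivAt_log_coeff_of_riccati (hT : g T ≠ 0) {γ σ : ℝ} (hγ : γ ≠ 0) (hσ : σ ≠ 0) :
    HasDerivAt (fun s => (1 / (2 * γ)) * (Real.log (g s / g T) - (T - s) * g T))
      (-((1 / 2) * σ ^ 2 * g t ^ 2 * ((1 / (γ * σ ^ 2)) * (T - t) * g T / g t))) t := by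
  have hlog := hasDerivAt_log_div_const_of_riccati hg ht hT
  have hlin : HasDerivAt (fun s => (T - s) * g T) (-g T) t := by
    simpa using ((hasDerivAt_const t T).sub (hasDerivAt_id t)).mul_const (g T)
  refine ((hlog.sub hlin).const_mul (1 / (2 * γ))).congr_deriv ?_
  field_simp
  linear_combination -hrel

lemma hasDerivAt_quad_coeff_of_riccati (c : ℝ) :
    HasDerivAt (fun s => c * (T - s) * g T / g s)
      (-(c - 2 * g t * (c * (T - t) * g T / g t))) t := by
  have hfun : (fun s => c * (T - s) * g T / g s) = fun s => c * g T * ((T - s) / g s) := by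
    ext s
    ring
  rw [hfun]
  refine ((hasDerivAt_sub_div_of_riccati hg ht T).const_mul (c * g T)).congr_deriv ?_
  field_simp
  linear_combination c * hrel

end Riccati

theorem stmt2_general
    (T σ ν₀ γ : ℝ) (hσ : 0 < σ) (hν : 0 < ν₀) (hγ : 0 < γ)
    (g : ℝ → ℝ) (hg : ∀ t, g t = ν₀^2 / (σ^2 + ν₀^2 * t))
    (a b : ℝ → ℝ)
    (ha : ∀ t, a t = (1/(2*γ)) * (Real.log (g t / g T) - (T - t) * g T))
    (hb : ∀ t, b t = (1/(γ*σ^2)) * (T - t) * g T / g t) :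
    -- a and b are C¹ on [0,T] and satisfy the ODE system there
    (∀ t ∈ Icc (0:ℝ) T,
      HasDerivAt a (-((1/2) * σ^2 * (g t)^2 * b t)) t
      ∧ HasDerivAt b (-(1/(γ*σ^2) - 2 * g t * b t)) t)
    -- the derivative functions are continuous on [0,T]
    ∧ ContinuousOn (fun t => -((1/2) * σ^2 * (g t)^2 * b t)) (Icc 0 T)
    ∧ ContinuousOn (fun t => -(1/(γ*σ^2) - 2 * g t * b t)) (Icc 0 T)
    -- terminal conditions
    ∧ a T = 0 ∧ b T = 0 := by
  have hD : ∀ s : ℝ, 0 ≤ s → σ ^ 2 + ν₀ ^ 2 * s ≠ 0 := fun s hs => by positivity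
  have hg_ne : ∀ s : ℝ, 0 ≤ s → g s ≠ 0 := fun s hs => by
    rw [hg]; exact div_ne_zero (by positivity) (hD s hs)
  have hg_deriv : ∀ s : ℝ, 0 ≤ s → HasDerivAt g (-g s ^ 2) s := fun s hs => by
    rw [show g = fun s => ν₀ ^ 2 / (σ ^ 2 + ν₀ ^ 2 * s) from funext hg]
    exact hasDerivAt_div_affine (hD s hs)
  have hderiv : ∀ t ∈ Icc (0:ℝ) T, HasDerivAt a (-((1/2) * σ^2 * (g t)^2 * b t)) t
      ∧ HasDerivAt b (-(1/(γ*σ^2) - 2 * g t * b t)) t := by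
    rintro t ⟨ht0, htT⟩
    have hT0 : 0 ≤ T := ht0.trans htT
    have hrel : g t - g T = (T - t) * g t * g T := by
      simpa only [hg] using div_affine_sub_div_affine (hD t ht0) (hD T hT0)
    obtain rfl := funext ha
    obtain rfl := funext hb
    exact ⟨hasDerivAt_log_coeff_of_riccati (hg_deriv t ht0) (hg_ne t ht0)
        hrel (hg_ne T hT0) hγ.ne' hσ.ne',
      hasDerivAt_quad_coeff_of_riccati (hg_deriv t ht0) (hg_ne t ht0) hrel _⟩
  have hg_cont : ContinuousOn g (Icc 0 T) := fun t ht =>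
    (hg_deriv t ht.1).continuousAt.continuousWithinAt
  have hb_cont : ContinuousOn b (Icc 0 T) := fun t ht =>
    (hderiv t ht).2.continuousAt.continuousWithinAt
  exact ⟨hderiv, by fun_prop, by fun_prop, by simp [ha], by simp [hb]⟩

theorem stmt2
    (T σ ν₀ γ : ℝ) (hT : 0 < T) (hσ : 0 < σ) (hν : 0 < ν₀) (hγ : 0 < γ)
    (g : ℝ → ℝ) (hg : ∀ t, g t = ν₀^2 / (σ^2 + ν₀^2 * t))
    (a b : ℝ → ℝ)
    (ha : ∀ t, a t = (1/(2*γ)) * (Real.log (g t / g T) - (T - t) * g T))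
    (hb : ∀ t, b t = (1/(γ*σ^2)) * (T - t) * g T / g t) :
    -- a and b are C¹ on [0,T] and satisfy the ODE system there
    (∀ t ∈ Icc (0:ℝ) T,
      HasDerivAt a (-((1/2) * σ^2 * (g t)^2 * b t)) t
      ∧ HasDerivAt b (-(1/(γ*σ^2) - 2 * g t * b t)) t)
    -- the derivative functions are continuous on [0,T]
    ∧ ContinuousOn (fun t => -((1/2) * σ^2 * (g t)^2 * b t)) (Icc 0 T)
    ∧ ContinuousOn (fun t => -(1/(γ*σ^2) - 2 * g t * b t)) (Icc 0 T)
    -- terminal conditions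
    ∧ a T = 0 ∧ b T = 0 :=
  stmt2_general T σ ν₀ γ hσ hν hγ g hg a b ha hb

end
end

section
/- Define u(t,V,β) = −exp(−γ(e^{r(T−t)}V + (1/(2γ))(log(g(t)/g(T)) − (T−t)g(T)) + (1/(2γσ²))(T−t)(g(T)/g(t))(β−r)²)). Then u satisfies, on [0,T]×ℝ×ℝ, the HJB equation −∂_t u − (1/2)σ²g(t)²∂²_{ββ}u − sup_{M∈ℝ}{((β−r)M + rV)∂_V u + (1/2)σ²M²∂²_{VV}u + σ²g(t)M∂²_{Vβ}u} = 0 with terminal condition u(T,V,β) = −exp(−γV), and the supremum is attained at M* = e^{−r(T−t)}(g(T)/g(t))(β−r)/(γσ²). -/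
/-! For `u = -exp (-(a t * V + c t + b t * (β - r) ^ 2))` every partial derivative is a polynomial
multiple of `u`. Since `u < 0`, the Hamiltonian is then a concave quadratic in `M`, maximised at
`M* = (β - r) (1 - 2 σ² g b) / (σ² a)`, and the HJB residual is `u` times a polynomial in `V` and
`(β - r)²` which vanishes identically as soon as `a' = -r a`, `b' = 2 g b - 1 / (2 σ²)` and
`c' = -σ² g² b`. The explicit coefficients solve this Riccati system because `1 / g` is affine with
slope one: `g' = -g²` and `g T / g t = 1 - (T - t) g T`. -/

noncomputable section

open Set

/-- ∂ₜ for a function u(t,V,β). -/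
def updt (u : ℝ → ℝ → ℝ → ℝ) (t V β : ℝ) : ℝ := deriv (fun s => u s V β) t
/-- ∂_V for a function u(t,V,β). -/
def updV (u : ℝ → ℝ → ℝ → ℝ) (t V β : ℝ) : ℝ := deriv (fun x => u t x β) V
/-- ∂_β for a function u(t,V,β). -/
def updb (u : ℝ → ℝ → ℝ → ℝ) (t V β : ℝ) : ℝ := deriv (fun y => u t V y) β
/-- ∂²_{VV} for a function u(t,V,β). -/
def updVV (u : ℝ → ℝ → ℝ → ℝ) (t V β : ℝ) : ℝ := deriv (fun x => updV u t x β) V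
/-- ∂²_{ββ} for a function u(t,V,β). -/
def updbb (u : ℝ → ℝ → ℝ → ℝ) (t V β : ℝ) : ℝ := deriv (fun y => updb u t V y) β
/-- ∂²_{Vβ} for a function u(t,V,β). -/
def updVb (u : ℝ → ℝ → ℝ → ℝ) (t V β : ℝ) : ℝ := deriv (fun y => updV u t V y) β

/-- The quantity inside the supremum of the CARA HJB equation. -/
def hamM (σ r gt : ℝ) (u : ℝ → ℝ → ℝ → ℝ) (t V β M : ℝ) : ℝ :=
  ((β - r) * M + r * V) * updV u t V β + (1/2) * σ^2 * M^2 * updVV u t V β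
    + σ^2 * gt * M * updVb u t V β

open Real

theorem hasDerivAt_neg_exp_neg {f : ℝ → ℝ} {f' x : ℝ} (hf : HasDerivAt f f' x) :
    HasDerivAt (fun x => -exp (-f x)) (-f' * -exp (-f x)) x :=
  hf.neg.exp.fun_neg.congr_deriv (by simp [mul_comm])

def IsCARAAnsatz (u : ℝ → ℝ → ℝ → ℝ) (a b c : ℝ → ℝ) (r : ℝ) : Prop :=
  u = fun t V β => -exp (-(a t * V + c t + b t * (β - r) ^ 2))

def optimalControl (σ r k : ℝ) (a b : ℝ → ℝ) (t β : ℝ) : ℝ :=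
  (β - r) * (1 - 2 * σ ^ 2 * k * b t) / (σ ^ 2 * a t)

namespace IsCARAAnsatz

variable {u : ℝ → ℝ → ℝ → ℝ} {a b c : ℝ → ℝ} {r σ k t : ℝ}

theorem lt_zero (hu : IsCARAAnsatz u a b c r) (t V β : ℝ) : u t V β < 0 := by
  subst hu
  exact neg_neg_of_pos (exp_pos _)

theorem hasDerivAt_V (hu : IsCARAAnsatz u a b c r) (t V β : ℝ) :
    HasDerivAt (fun x => u t x β) (-a t * u t V β) V := by
  subst hu
  exact (hasDerivAt_neg_exp_neg ((((hasDerivAt_id' V).const_mul (a t)).add_const (c t)).add_const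
    (b t * (β - r) ^ 2))).congr_deriv (by ring)

theorem hasDerivAt_β (hu : IsCARAAnsatz u a b c r) (t V β : ℝ) :
    HasDerivAt (fun y => u t V y) (-(2 * b t * (β - r)) * u t V β) β := by
  subst hu
  exact (hasDerivAt_neg_exp_neg ((((hasDerivAt_id' β).sub_const r).fun_pow 2).const_mul (b t)
    |>.const_add (a t * V + c t))).congr_deriv (by push_cast; ring)

theorem hasDerivAt_t (hu : IsCARAAnsatz u a b c r) {a' b' c' : ℝ} (ha : HasDerivAt a a' t)
    (hb : HasDerivAt b b' t) (hc : HasDerivAt c c' t) (V β : ℝ) :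
    HasDerivAt (fun s => u s V β) (-(a' * V + c' + b' * (β - r) ^ 2) * u t V β) t := by
  subst hu
  exact hasDerivAt_neg_exp_neg (((ha.mul_const V).add hc).add (hb.mul_const _))

theorem updV_eq (hu : IsCARAAnsatz u a b c r) (t V β : ℝ) :
    updV u t V β = -a t * u t V β :=
  (hu.hasDerivAt_V t V β).deriv

theorem updb_eq (hu : IsCARAAnsatz u a b c r) (t V β : ℝ) :
    updb u t V β = -(2 * b t * (β - r)) * u t V β :=
  (hu.hasDerivAt_β t V β).deriv

theorem updVV_eq (hu : IsCARAAnsatz u a b c r) (t V β : ℝ) :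
    updVV u t V β = a t ^ 2 * u t V β := by
  rw [updVV, funext fun x => hu.updV_eq t x β, ((hu.hasDerivAt_V t V β).const_mul _).deriv]
  ring

theorem updVb_eq (hu : IsCARAAnsatz u a b c r) (t V β : ℝ) :
    updVb u t V β = 2 * a t * b t * (β - r) * u t V β := by
  rw [updVb, funext fun y => hu.updV_eq t V y, ((hu.hasDerivAt_β t V β).const_mul _).deriv]
  ring

theorem updbb_eq (hu : IsCARAAnsatz u a b c r) (t V β : ℝ) :
    updbb u t V β = (4 * b t ^ 2 * (β - r) ^ 2 - 2 * b t) * u t V β := by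
  have hlin : HasDerivAt (fun y => -(2 * b t * (y - r))) (-(2 * b t * 1)) β :=
    (((hasDerivAt_id' β).sub_const r).const_mul _).neg
  rw [updbb, funext (hu.updb_eq t V), (hlin.fun_mul (hu.hasDerivAt_β t V β)).deriv]
  ring

theorem updt_eq (hu : IsCARAAnsatz u a b c r) {a' b' c' : ℝ} (ha : HasDerivAt a a' t)
    (hb : HasDerivAt b b' t) (hc : HasDerivAt c c' t) (V β : ℝ) :
    updt u t V β = -(a' * V + c' + b' * (β - r) ^ 2) * u t V β :=
  (hu.hasDerivAt_t ha hb hc V β).deriv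

theorem hamM_eq (hu : IsCARAAnsatz u a b c r) (hσ : σ ≠ 0) (ha : a t ≠ 0) (V β M : ℝ) :
    hamM σ r k u t V β M = hamM σ r k u t V β (optimalControl σ r k a b t β)
      + σ ^ 2 * a t ^ 2 / 2 * u t V β * (M - optimalControl σ r k a b t β) ^ 2 := by
  simp only [hamM, hu.updV_eq, hu.updVV_eq, hu.updVb_eq, optimalControl]
  field_simp
  ring

theorem isGreatest_hamM (hu : IsCARAAnsatz u a b c r) (hσ : σ ≠ 0) (ha : a t ≠ 0) (V β : ℝ) :
    IsGreatest (Set.range (hamM σ r k u t V β))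
      (hamM σ r k u t V β (optimalControl σ r k a b t β)) := by
  refine ⟨Set.mem_range_self _, ?_⟩
  rintro _ ⟨M, rfl⟩
  rw [hu.hamM_eq hσ ha V β M, add_le_iff_nonpos_right]
  exact mul_nonpos_of_nonpos_of_nonneg
    (mul_nonpos_of_nonneg_of_nonpos (by positivity) (hu.lt_zero t V β).le) (sq_nonneg _)

theorem hjb_of_riccati (hu : IsCARAAnsatz u a b c r) (hσ : σ ≠ 0) (ha0 : a t ≠ 0)
    (ha : HasDerivAt a (-r * a t) t) (hb : HasDerivAt b (2 * k * b t - 1 / (2 * σ ^ 2)) t)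
    (hc : HasDerivAt c (-(σ ^ 2 * k ^ 2 * b t)) t) (V β : ℝ) :
    -updt u t V β - (1/2) * σ ^ 2 * k ^ 2 * updbb u t V β
      - hamM σ r k u t V β (optimalControl σ r k a b t β) = 0 := by
  rw [hu.updt_eq ha hb hc, hu.updbb_eq, hamM, hu.updV_eq, hu.updVV_eq, hu.updVb_eq, optimalControl]
  field_simp
  ring

end IsCARAAnsatz

def caraVCoeff (γ r T s : ℝ) : ℝ := γ * exp (r * (T - s))

def caraBetaCoeff (σ : ℝ) (g : ℝ → ℝ) (T s : ℝ) : ℝ := (T - s) * (g T / g s) / (2 * σ ^ 2)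

def caraConstCoeff (g : ℝ → ℝ) (T s : ℝ) : ℝ := (log (g s / g T) - (T - s) * g T) / 2

theorem hasDerivAt_caraVCoeff (γ r T t : ℝ) :
    HasDerivAt (caraVCoeff γ r T) (-r * caraVCoeff γ r T t) t :=
  ((((hasDerivAt_id' t).const_sub T).const_mul r).exp.const_mul γ).congr_deriv
    (by rw [caraVCoeff]; ring)

section AffineReciprocal

variable {σ ν₀ T t : ℝ} {g : ℝ → ℝ}

theorem hasDerivAt_neg_sq_of_eq_div_affine (hg : ∀ s, g s = ν₀ ^ 2 / (σ ^ 2 + ν₀ ^ 2 * s))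
    (ht : σ ^ 2 + ν₀ ^ 2 * t ≠ 0) : HasDerivAt g (-g t ^ 2) t := by
  obtain rfl : g = _ := funext hg
  refine ((hasDerivAt_const t _).div (((hasDerivAt_id' t).const_mul _).const_add _) ht).congr_deriv
    ?_
  field_simp
  ring

theorem div_eq_one_sub_mul_of_eq_div_affine (hg : ∀ s, g s = ν₀ ^ 2 / (σ ^ 2 + ν₀ ^ 2 * s))
    (hν : ν₀ ≠ 0) (hT : σ ^ 2 + ν₀ ^ 2 * T ≠ 0) (t : ℝ) :
    g T / g t = 1 - (T - t) * g T := by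
  rcases eq_or_ne (σ ^ 2 + ν₀ ^ 2 * t) 0 with ht | ht
  · rw [hg, hg, ht, div_zero, div_zero, mul_div_assoc', eq_comm, sub_eq_zero, eq_div_iff hT]
    linear_combination ht
  · simp only [hg]
    field_simp
    ring

theorem hasDerivAt_caraBetaCoeff (hg : ∀ s, g s = ν₀ ^ 2 / (σ ^ 2 + ν₀ ^ 2 * s)) (hν : ν₀ ≠ 0)
    (hT : σ ^ 2 + ν₀ ^ 2 * T ≠ 0) (ht : g t ≠ 0) :
    HasDerivAt (caraBetaCoeff σ g T) (2 * g t * caraBetaCoeff σ g T t - 1 / (2 * σ ^ 2)) t := by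
  have hT_sub : HasDerivAt (fun s => T - s) (-1) t := (hasDerivAt_id' t).const_sub T
  have h := (hT_sub.fun_mul ((hT_sub.mul_const (g T)).const_sub 1)).div_const (2 * σ ^ 2)
  refine (h.congr_deriv ?_).congr_of_eventuallyEq (Filter.Eventually.of_forall fun s => ?_)
  · rw [caraBetaCoeff]
    field_simp
    ring
  · rw [caraBetaCoeff, div_eq_one_sub_mul_of_eq_div_affine hg hν hT]

theorem hasDerivAt_caraConstCoeff (hg : ∀ s, g s = ν₀ ^ 2 / (σ ^ 2 + ν₀ ^ 2 * s)) (hσ : σ ≠ 0)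
    (hν : ν₀ ≠ 0) (hT : σ ^ 2 + ν₀ ^ 2 * T ≠ 0) (ht : σ ^ 2 + ν₀ ^ 2 * t ≠ 0) :
    HasDerivAt (caraConstCoeff g T) (-(σ ^ 2 * g t ^ 2 * caraBetaCoeff σ g T t)) t := by
  have hgt : g t ≠ 0 := by rw [hg]; exact div_ne_zero (pow_ne_zero 2 hν) ht
  have hgT : g T ≠ 0 := by rw [hg]; exact div_ne_zero (pow_ne_zero 2 hν) hT
  have hgT_eq := (div_eq_iff hgt).1 (div_eq_one_sub_mul_of_eq_div_affine hg hν hT t)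
  have h := ((((hasDerivAt_neg_sq_of_eq_div_affine hg ht).div_const (g T)).log
    (div_ne_zero hgt hgT)).fun_sub (((hasDerivAt_id' t).const_sub T).mul_const (g T))).div_const 2
  refine h.congr_deriv ?_
  rw [caraBetaCoeff]
  field_simp
  linear_combination hgT_eq

end AffineReciprocal

theorem stmt3_general
    (T r σ ν₀ γ : ℝ) (hσ : 0 < σ) (hν : 0 < ν₀) (hγ : 0 < γ)
    (g : ℝ → ℝ) (hg : ∀ t, g t = ν₀^2 / (σ^2 + ν₀^2 * t))
    (u : ℝ → ℝ → ℝ → ℝ)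
    (hu : ∀ t V β : ℝ, u t V β =
      -Real.exp (-γ * (Real.exp (r*(T-t)) * V
        + (1/(2*γ)) * (Real.log (g t / g T) - (T - t) * g T)
        + (1/(2*γ*σ^2)) * (T - t) * (g T / g t) * (β - r)^2))) :
    (∀ t ∈ Icc (0:ℝ) T, ∀ V β : ℝ,
      -- the supremum in the HJB equation is attained at M*
      IsGreatest (Set.range (hamM σ r (g t) u t V β))
        (hamM σ r (g t) u t V β
          (Real.exp (-(r*(T-t))) * (g T / g t) * (β - r) / (γ*σ^2)))
      ∧
      -- the HJB equation holds
      -updt u t V β - (1/2) * σ^2 * (g t)^2 * updbb u t V β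
        - hamM σ r (g t) u t V β
            (Real.exp (-(r*(T-t))) * (g T / g t) * (β - r) / (γ*σ^2)) = 0)
    ∧
    -- terminal condition
    (∀ V β : ℝ, u T V β = -Real.exp (-γ * V)) := by
  have hσ0 : σ ≠ 0 := hσ.ne'
  have hans : IsCARAAnsatz u (caraVCoeff γ r T) (caraBetaCoeff σ g T) (caraConstCoeff g T) r := by
    funext t V β
    rw [hu, caraVCoeff, caraBetaCoeff, caraConstCoeff]
    field_simp
  refine ⟨fun t ht V β => ?_, fun V β => by simp [hu]⟩
  have hDt : σ ^ 2 + ν₀ ^ 2 * t ≠ 0 := by have := ht.1; positivity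
  have hDT : σ ^ 2 + ν₀ ^ 2 * T ≠ 0 := by have := ht.1.trans ht.2; positivity
  have hgt : g t ≠ 0 := by rw [hg]; exact div_ne_zero (by positivity) hDt
  have ha0 : caraVCoeff γ r T t ≠ 0 := by rw [caraVCoeff]; positivity
  have hM : exp (-(r * (T - t))) * (g T / g t) * (β - r) / (γ * σ ^ 2)
      = optimalControl σ r (g t) (caraVCoeff γ r T) (caraBetaCoeff σ g T) t β := by
    rw [optimalControl, caraVCoeff, caraBetaCoeff, exp_neg]
    field_simp
    linear_combination
      (β - r) * (div_eq_iff hgt).1 (div_eq_one_sub_mul_of_eq_div_affine hg hν.ne' hDT t)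
  rw [hM]
  exact ⟨hans.isGreatest_hamM hσ0 ha0 V β,
    hans.hjb_of_riccati hσ0 ha0 (hasDerivAt_caraVCoeff γ r T t)
      (hasDerivAt_caraBetaCoeff hg hν.ne' hDT hgt)
      (hasDerivAt_caraConstCoeff hg hσ0 hν.ne' hDT hDt) V β⟩

theorem stmt3
    (T r σ ν₀ γ : ℝ) (hT : 0 < T) (hσ : 0 < σ) (hν : 0 < ν₀) (hγ : 0 < γ)
    (g : ℝ → ℝ) (hg : ∀ t, g t = ν₀^2 / (σ^2 + ν₀^2 * t))
    (u : ℝ → ℝ → ℝ → ℝ)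
    (hu : ∀ t V β : ℝ, u t V β =
      -Real.exp (-γ * (Real.exp (r*(T-t)) * V
        + (1/(2*γ)) * (Real.log (g t / g T) - (T - t) * g T)
        + (1/(2*γ*σ^2)) * (T - t) * (g T / g t) * (β - r)^2))) :
    (∀ t ∈ Icc (0:ℝ) T, ∀ V β : ℝ,
      -- the supremum in the HJB equation is attained at M*
      IsGreatest (Set.range (hamM σ r (g t) u t V β))
        (hamM σ r (g t) u t V β
          (Real.exp (-(r*(T-t))) * (g T / g t) * (β - r) / (γ*σ^2)))
      ∧
      -- the HJB equation holds
      -updt u t V β - (1/2) * σ^2 * (g t)^2 * updbb u t V β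
        - hamM σ r (g t) u t V β
            (Real.exp (-(r*(T-t))) * (g T / g t) * (β - r) / (γ*σ^2)) = 0)
    ∧
    -- terminal condition
    (∀ V β : ℝ, u T V β = -Real.exp (-γ * V)) :=
  stmt3_general T r σ ν₀ γ hσ hν hγ g hg u hu

end
end

section
/- Let γ > 0 with γ ≠ 1, let t′ ∈ [0,T), and let b ∈ C¹([t′,T]). Define d(t) = b(t) + 1/(σ²g(t)) for t ∈ [t′,T]. Then b satisfies the Riccati equation b′(t) + (1/γ)σ²g(t)²b(t)² + ((1−γ)/γ)(1/σ²) + 2((1−γ)/γ)g(t)b(t) = 0 on [t′,T] with terminal condition b(T) = 0 if and only if d satisfies the Bernoulli equation d′(t) + (1/γ)σ²g(t)²d(t)² − 2g(t)d(t) = 0 on [t′,T] with terminal condition d(T) = 1/(σ²g(T)). -/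
/-!
Where `σ² + ν₀² t ≠ 0` the shift `1 / (σ² g t) = 1 / ν₀² + t / σ²` is affine, so `d' = b' + 1 / σ²`.
Substituting `d = b + 1 / (σ² g)` into the Bernoulli expression then gives the Riccati expression
pointwise, and the terminal conditions correspond since `d T - 1 / (σ² g T) = b T`.
-/

open Set Topology

lemma bernoulli_shift_eq_riccati {γ σ G B B' : ℝ} (hγ : γ ≠ 0) (hσ : σ ≠ 0) (hG : G ≠ 0) :
    (B' + 1 / σ ^ 2) + (1 / γ) * σ ^ 2 * G ^ 2 * (B + 1 / (σ ^ 2 * G)) ^ 2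
        - 2 * G * (B + 1 / (σ ^ 2 * G))
      = B' + (1 / γ) * σ ^ 2 * G ^ 2 * B ^ 2 + ((1 - γ) / γ) * (1 / σ ^ 2)
        + 2 * ((1 - γ) / γ) * G * B := by
  field_simp
  ring

section Gain

variable {σ ν₀ : ℝ} {g : ℝ → ℝ}

lemma one_div_sq_mul_gain_eq (hg : ∀ s, g s = ν₀ ^ 2 / (σ ^ 2 + ν₀ ^ 2 * s))
    (hσ : σ ≠ 0) (hν : ν₀ ≠ 0) {s : ℝ} (hs : σ ^ 2 + ν₀ ^ 2 * s ≠ 0) :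
    1 / (σ ^ 2 * g s) = 1 / ν₀ ^ 2 + s / σ ^ 2 := by
  rw [hg]
  field_simp

lemma hasDerivAt_one_div_sq_mul_gain (hg : ∀ s, g s = ν₀ ^ 2 / (σ ^ 2 + ν₀ ^ 2 * s))
    (hσ : σ ≠ 0) (hν : ν₀ ≠ 0) {t : ℝ} (ht : σ ^ 2 + ν₀ ^ 2 * t ≠ 0) :
    HasDerivAt (fun s => 1 / (σ ^ 2 * g s)) (1 / σ ^ 2) t := by
  have haffine : HasDerivAt (fun s : ℝ => 1 / ν₀ ^ 2 + s / σ ^ 2) (1 / σ ^ 2) t :=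
    ((hasDerivAt_id t).div_const _).const_add _
  have hne : ∀ᶠ s in 𝓝 t, σ ^ 2 + ν₀ ^ 2 * s ≠ 0 :=
    (by fun_prop : Continuous fun s : ℝ => σ ^ 2 + ν₀ ^ 2 * s).continuousAt.eventually_ne ht
  exact haffine.congr_of_eventuallyEq (hne.mono fun s hs => one_div_sq_mul_gain_eq hg hσ hν hs)

end Gain

theorem stmt6_general
    (T σ ν₀ γ t' : ℝ) (hσ : 0 < σ) (hν : 0 < ν₀)
    (hγ : 0 < γ) (ht' : t' ∈ Ico (0:ℝ) T)
    (g : ℝ → ℝ) (hg : ∀ t, g t = ν₀^2 / (σ^2 + ν₀^2 * t))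
    (b : ℝ → ℝ)
    -- b ∈ C¹([t',T])
    (hb : ∀ t ∈ Icc t' T, DifferentiableAt ℝ b t)
    (d : ℝ → ℝ) (hd : ∀ t, d t = b t + 1/(σ^2 * g t)) :
    -- b solves the Riccati equation with b(T)=0 iff d solves the
    -- Bernoulli equation with d(T)=1/(σ²g(T)).
    ((∀ t ∈ Icc t' T,
        deriv b t + (1/γ) * σ^2 * (g t)^2 * (b t)^2 + ((1-γ)/γ) * (1/σ^2)
          + 2 * ((1-γ)/γ) * g t * b t = 0)
      ∧ b T = 0)
    ↔
    ((∀ t ∈ Icc t' T,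
        deriv d t + (1/γ) * σ^2 * (g t)^2 * (d t)^2 - 2 * g t * d t = 0)
      ∧ d T = 1/(σ^2 * g T)) := by
  have hpos : ∀ t ∈ Icc t' T, 0 < σ ^ 2 + ν₀ ^ 2 * t := fun t ht => by
    have : 0 ≤ t := ht'.1.trans ht.1
    positivity
  have hequation : ∀ t ∈ Icc t' T,
      deriv d t + (1/γ) * σ^2 * (g t)^2 * (d t)^2 - 2 * g t * d t
        = deriv b t + (1/γ) * σ^2 * (g t)^2 * (b t)^2 + ((1-γ)/γ) * (1/σ^2)
          + 2 * ((1-γ)/γ) * g t * b t := fun t ht => by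
    have hderiv : deriv d t = deriv b t + 1 / σ ^ 2 := by
      rw [funext hd]
      exact ((hb t ht).hasDerivAt.add
        (hasDerivAt_one_div_sq_mul_gain hg hσ.ne' hν.ne' (hpos t ht).ne')).deriv
    have hgt : g t ≠ 0 := by
      rw [hg]
      exact div_ne_zero (by positivity) (hpos t ht).ne'
    rw [hderiv, hd t]
    exact bernoulli_shift_eq_riccati hγ.ne' hσ.ne' hgt
  have hterminal : d T = 1/(σ^2 * g T) ↔ b T = 0 := by
    rw [hd T, add_eq_right]
  refine and_congr (forall₂_congr fun t ht => ?_) hterminal.symm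
  rw [hequation t ht]

theorem stmt6
    (T σ ν₀ γ t' : ℝ) (hT : 0 < T) (hσ : 0 < σ) (hν : 0 < ν₀)
    (hγ : 0 < γ) (hγ1 : γ ≠ 1) (ht' : t' ∈ Ico (0:ℝ) T)
    (g : ℝ → ℝ) (hg : ∀ t, g t = ν₀^2 / (σ^2 + ν₀^2 * t))
    (b : ℝ → ℝ)
    -- b ∈ C¹([t',T])
    (hb : ∀ t ∈ Icc t' T, DifferentiableAt ℝ b t)
    (hbC1 : ContinuousOn (deriv b) (Icc t' T))
    (d : ℝ → ℝ) (hd : ∀ t, d t = b t + 1/(σ^2 * g t)) :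
    -- b solves the Riccati equation with b(T)=0 iff d solves the
    -- Bernoulli equation with d(T)=1/(σ²g(T)).
    ((∀ t ∈ Icc t' T,
        deriv b t + (1/γ) * σ^2 * (g t)^2 * (b t)^2 + ((1-γ)/γ) * (1/σ^2)
          + 2 * ((1-γ)/γ) * g t * b t = 0)
      ∧ b T = 0)
    ↔
    ((∀ t ∈ Icc t' T,
        deriv d t + (1/γ) * σ^2 * (g t)^2 * (d t)^2 - 2 * g t * d t = 0)
      ∧ d T = 1/(σ^2 * g T)) :=
  stmt6_general T σ ν₀ γ t' hσ hν hγ ht' g hg b hb d hd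
end

section
/- Let n ≥ 1 and 0 < t₁ < t₂ < … < t_n. Define the n×n real matrix 𝔖 by 𝔖_{ij} = ν₀² t_i t_j + σ² min(t_i, t_j), the vector L ∈ ℝⁿ by L_i = ν₀² t_i, and the vector v ∈ ℝⁿ by v_i = 0 for i < n and v_n = ν₀²/(σ² + ν₀² t_n). Then vᵀ𝔖 = Lᵀ; consequently, if 𝔖 is invertible then Lᵀ𝔖⁻¹ = vᵀ and ν₀² − Lᵀ𝔖⁻¹L = σ²ν₀²/(σ² + ν₀² t_n). -/
/-!
Since `t` is increasing, the last row of `𝔖` is `𝔖_{nj} = (ν₀² t_n + σ²) t_j`, a multiple of `L`;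
hence `vᵀ𝔖 = Lᵀ` for `v` supported on the last coordinate. Multiplying by `𝔖⁻¹` gives `Lᵀ𝔖⁻¹ = vᵀ`,
and then `Lᵀ𝔖⁻¹L = v_n L_n` is explicit.
-/

noncomputable section

open Matrix

/-- The matrix `𝔖`: covariance of `(μ tᵢ + σ W_{tᵢ})ᵢ` with `a = Var μ = ν₀²` and `b = σ²`. -/
def driftObservationCov {ι K : Type*} [Field K] [LinearOrder K] (a b : K) (t : ι → K) :
    Matrix ι ι K :=
  of fun i j => a * t i * t j + b * min (t i) (t j)

theorem single_vecMul_driftObservationCov {ι K : Type*} [Fintype ι] [DecidableEq ι] [Field K]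
    [LinearOrder K] (a b : K) (t : ι → K) (m : ι) (hm : ∀ i, t i ≤ t m)
    (hden : b + a * t m ≠ 0) :
    Pi.single m (a / (b + a * t m)) ᵥ* driftObservationCov a b t = a • t := by
  ext j
  simp only [single_vecMul, driftObservationCov, row_apply, of_apply, Pi.smul_apply, smul_eq_mul,
    min_eq_right (hm j)]
  field_simp
  ring

theorem vecMul_nonsing_inv_of_vecMul_eq {ι K : Type*} [Fintype ι] [DecidableEq ι] [CommRing K]
    {A : Matrix ι ι K} {v w : ι → K} (hA : IsUnit A.det) (h : v ᵥ* A = w) :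
    w ᵥ* A⁻¹ = v := by
  rw [← h, vecMul_vecMul, mul_nonsing_inv _ hA, vecMul_one]

theorem stmt10_general
    (σ ν₀ : ℝ) (hσ : 0 < σ)
    (n : ℕ) (t : Fin (n+1) → ℝ)
    (ht0 : 0 < t 0) (htmono : StrictMono t)
    (S : Matrix (Fin (n+1)) (Fin (n+1)) ℝ)
    (hS : ∀ i j, S i j = ν₀^2 * t i * t j + σ^2 * min (t i) (t j))
    (L : Fin (n+1) → ℝ) (hL : ∀ i, L i = ν₀^2 * t i)
    (v : Fin (n+1) → ℝ)
    (hv : ∀ i, v i = if i = Fin.last n then ν₀^2 / (σ^2 + ν₀^2 * t (Fin.last n)) else 0) :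
    -- vᵀ 𝔖 = Lᵀ
    v ᵥ* S = L
    -- consequences when 𝔖 is invertible
    ∧ (IsUnit S.det →
        L ᵥ* S⁻¹ = v
        ∧ ν₀^2 - (L ᵥ* S⁻¹) ⬝ᵥ L = σ^2 * ν₀^2 / (σ^2 + ν₀^2 * t (Fin.last n))) := by
  have hmax : ∀ i, t i ≤ t (Fin.last n) := fun i => htmono.monotone (Fin.le_last i)
  have hden : σ^2 + ν₀^2 * t (Fin.last n) ≠ 0 :=
    (add_pos_of_pos_of_nonneg (pow_pos hσ 2)
      (mul_nonneg (sq_nonneg ν₀) (ht0.le.trans (hmax 0)))).ne'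
  obtain rfl : S = driftObservationCov (ν₀^2) (σ^2) t := ext hS
  obtain rfl : L = ν₀^2 • t := funext hL
  obtain rfl : v = Pi.single (Fin.last n) (ν₀^2 / (σ^2 + ν₀^2 * t (Fin.last n))) :=
    funext fun i => by rw [hv, Pi.single_apply]
  have hvS := single_vecMul_driftObservationCov _ _ t _ hmax hden
  refine ⟨hvS, fun hdet => ?_⟩
  rw [vecMul_nonsing_inv_of_vecMul_eq hdet hvS, single_dotProduct, Pi.smul_apply, smul_eq_mul]
  refine ⟨rfl, ?_⟩
  field_simp
  ring

theorem stmt10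
    (σ ν₀ : ℝ) (hσ : 0 < σ) (hν : 0 < ν₀)
    (n : ℕ) (t : Fin (n+1) → ℝ)
    (ht0 : 0 < t 0) (htmono : StrictMono t)
    (S : Matrix (Fin (n+1)) (Fin (n+1)) ℝ)
    (hS : ∀ i j, S i j = ν₀^2 * t i * t j + σ^2 * min (t i) (t j))
    (L : Fin (n+1) → ℝ) (hL : ∀ i, L i = ν₀^2 * t i)
    (v : Fin (n+1) → ℝ)
    (hv : ∀ i, v i = if i = Fin.last n then ν₀^2 / (σ^2 + ν₀^2 * t (Fin.last n)) else 0) :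
    -- vᵀ 𝔖 = Lᵀ
    v ᵥ* S = L
    -- consequences when 𝔖 is invertible
    ∧ (IsUnit S.det →
        L ᵥ* S⁻¹ = v
        ∧ ν₀^2 - (L ᵥ* S⁻¹) ⬝ᵥ L = σ^2 * ν₀^2 / (σ^2 + ν₀^2 * t (Fin.last n))) :=
  stmt10_general σ ν₀ hσ n t ht0 htmono S hS L hL v hv

end
end

section
/- Define a(t) = (1/(2γ))∫_t^T Tr(Σ⁻¹(Γ_s − Γ_T)) ds and B(t) = (1/γ)(Γ_t⁻¹ − Γ_t⁻¹Γ_TΓ_t⁻¹) for t ∈ [0,T]. Then a ∈ C¹([0,T]), B is a C¹ symmetric-matrix-valued function on [0,T], and (a,B) satisfies the system a′(t) + (1/2)Tr(Γ_tΣ⁻¹Γ_t B(t)) = 0 and B′(t) + (1/γ)Σ⁻¹ − Σ⁻¹Γ_tB(t) − B(t)Γ_tΣ⁻¹ = 0 on [0,T], with terminal conditions a(T) = 0 and B(T) = 0. -/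
/-!
Write `M t = Γ₀⁻¹ + t Σ⁻¹`, so that `Γ t = (M t)⁻¹`. Wherever `M t` is invertible,
`B t = γ⁻¹ (M t - M t Γ_T M t)` is a quadratic polynomial in `t`; differentiating it and
cancelling `Γ t M t = 1` gives the Riccati equation, and the same cancellation turns
`Tr (Γ t Σ⁻¹ Γ t B t)` into `γ⁻¹ Tr (Σ⁻¹ (Γ t - Γ_T))`, the integrand defining `a`, so the
equation for `a` is the fundamental theorem of calculus. Since `M t` is positive definite for
`t ≥ 0`, all of `[0, T]` lies in the open set where `M t` is invertible, so the derivatives at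
the endpoints are two-sided.
-/

open Set Matrix

section Calculus

variable {𝕜 : Type*} [NontriviallyNormedField 𝕜] {l m p : Type*}

theorem Matrix.hasDerivAt_add_smul_apply (A N : Matrix m p 𝕜) (t : 𝕜) (i : m) (j : p) :
    HasDerivAt (fun s : 𝕜 => (A + s • N) i j) (N i j) t := by
  simpa using ((hasDerivAt_id t).mul_const (N i j)).const_add (A i j)

theorem Matrix.hasDerivAt_mul_apply [Fintype m] {X : 𝕜 → Matrix l m 𝕜} {Y : 𝕜 → Matrix m p 𝕜}
    {X' : Matrix l m 𝕜} {Y' : Matrix m p 𝕜} {t : 𝕜}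
    (hX : ∀ i j, HasDerivAt (fun s => X s i j) (X' i j) t)
    (hY : ∀ i j, HasDerivAt (fun s => Y s i j) (Y' i j) t) (i : l) (k : p) :
    HasDerivAt (fun s => (X s * Y s) i k) ((X' * Y t + X t * Y') i k) t := by
  simp only [mul_apply, add_apply, ← Finset.sum_add_distrib]
  exact HasDerivAt.fun_sum fun j _ => (hX i j).mul (hY j k)

theorem Matrix.hasDerivAt_smul_sub_mul_mul_apply [Fintype m] (A N C : Matrix m m 𝕜) (c t : 𝕜)
    (i j : m) :
    HasDerivAt (fun s => (c • (A + s • N - (A + s • N) * C * (A + s • N))) i j)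
      ((c • (N - (N * C * (A + t • N) + (A + t • N) * C * N))) i j) t := by
  have hM := hasDerivAt_add_smul_apply A N t
  have hMC := hasDerivAt_mul_apply (Y := fun _ => C) (Y' := 0) hM fun _ _ => hasDerivAt_const t _
  have h := ((hM i j).sub (hasDerivAt_mul_apply hMC hM i j)).const_mul c
  simpa only [smul_apply, sub_apply, Pi.sub_apply, smul_eq_mul, mul_zero, add_zero] using h

end Calculus

theorem Matrix.continuousAt_inv_of_det_ne_zero {n 𝕜 : Type*} [Fintype n] [DecidableEq n]
    [Field 𝕜] [TopologicalSpace 𝕜] [IsTopologicalDivisionRing 𝕜]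
    {A : Matrix n n 𝕜} (h : A.det ≠ 0) : ContinuousAt Inv.inv A :=
  continuousAt_matrix_inv A (by simpa only [Ring.inverse_eq_inv'] using continuousAt_inv₀ h)

theorem intervalIntegral.hasDerivAt_integral_left_of_continuousOn {E : Type*}
    [NormedAddCommGroup E] [NormedSpace ℝ E] [CompleteSpace E] {f : ℝ → E} {s : Set ℝ}
    {a b : ℝ} (hs : IsOpen s) (hf : ContinuousOn f s) (hab : uIcc a b ⊆ s) :
    HasDerivAt (fun u => ∫ x in u..b, f x) (-f a) a := by
  have ha : a ∈ s := hab left_mem_uIcc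
  exact integral_hasDerivAt_left ((hf.mono hab).intervalIntegrable)
    (hf.stronglyMeasurableAtFilter hs a ha) (hf.continuousAt (hs.mem_nhds ha))

section Riccati

variable {n R : Type*} [Fintype n] [DecidableEq n] [CommRing R]
  {M : Matrix n n R} (N C : Matrix n n R) (c : R)

theorem Matrix.trace_inv_mul_mul_inv_mul_smul_sub (hM : IsUnit M.det) :
    trace (M⁻¹ * N * M⁻¹ * (c • (M - M * C * M))) = c * trace (N * (M⁻¹ - C)) := by
  have hexpand : M⁻¹ * N * M⁻¹ * (M - M * C * M) = M⁻¹ * N - M⁻¹ * (N * C * M) := by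
    simp only [Matrix.mul_sub, Matrix.mul_assoc, nonsing_inv_mul_cancel_left M _ hM,
      nonsing_inv_mul M hM, Matrix.mul_one]
  rw [Matrix.mul_smul, trace_smul, hexpand, trace_sub, trace_mul_comm M⁻¹, trace_mul_comm M⁻¹,
    Matrix.mul_assoc, mul_nonsing_inv M hM, Matrix.mul_one, Matrix.mul_sub, trace_sub, smul_eq_mul]

theorem Matrix.neg_riccati_rhs_eq (hM : IsUnit M.det) :
    -(c • N - N * M⁻¹ * (c • (M - M * C * M)) - c • (M - M * C * M) * M⁻¹ * N)
      = c • (N - (N * C * M + M * C * N)) := by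
  simp only [Matrix.mul_smul, Matrix.smul_mul, Matrix.mul_sub, Matrix.sub_mul, Matrix.mul_assoc,
    nonsing_inv_mul_cancel_left M _ hM, nonsing_inv_mul M hM, mul_nonsing_inv M hM,
    Matrix.mul_one, Matrix.one_mul, smul_sub, smul_add]
  abel

end Riccati

theorem Matrix.PosDef.add_smul_posSemidef {n : Type*} [Fintype n] {A N : Matrix n n ℝ}
    (hA : A.PosDef) (hN : N.PosSemidef) {t : ℝ} (ht : 0 ≤ t) : (A + t • N).PosDef :=
  hA.add_posSemidef (hN.smul ht)

theorem Matrix.IsSymm.mul_mul_self {n R : Type*} [Fintype n] [CommSemiring R] {M C : Matrix n n R}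
    (hM : M.IsSymm) (hC : C.IsSymm) : (M * C * M).IsSymm := by
  simp only [IsSymm, transpose_mul, hM.eq, hC.eq, Matrix.mul_assoc]

namespace Riccati

variable {n : Type*} [Fintype n] [DecidableEq n] {A N C : Matrix n n ℝ} {c t : ℝ}
  {Γ B : ℝ → Matrix n n ℝ}

theorem isOpen_setOf_det_ne_zero (A N : Matrix n n ℝ) :
    IsOpen {t : ℝ | (A + t • N).det ≠ 0} :=
  isOpen_ne.preimage (by fun_prop)

theorem continuousOn_inv (hΓ : ∀ t, Γ t = (A + t • N)⁻¹) :
    ContinuousOn Γ {t : ℝ | (A + t • N).det ≠ 0} := fun t ht => by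
  simp only [funext hΓ]
  exact ((continuousAt_inv_of_det_ne_zero ht).comp (f := fun s => A + s • N)
    (by fun_prop)).continuousWithinAt

theorem eq_smul_sub (hΓ : ∀ t, Γ t = (A + t • N)⁻¹)
    (hB : ∀ t, B t = c • ((Γ t)⁻¹ - (Γ t)⁻¹ * C * (Γ t)⁻¹)) (ht : (A + t • N).det ≠ 0) :
    B t = c • (A + t • N - (A + t • N) * C * (A + t • N)) := by
  rw [hB, hΓ, nonsing_inv_nonsing_inv _ ht.isUnit]

theorem trace_eq (hΓ : ∀ t, Γ t = (A + t • N)⁻¹)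
    (hB : ∀ t, B t = c • ((Γ t)⁻¹ - (Γ t)⁻¹ * C * (Γ t)⁻¹)) (ht : (A + t • N).det ≠ 0) :
    trace (Γ t * N * Γ t * B t) = c * trace (N * (Γ t - C)) := by
  rw [eq_smul_sub hΓ hB ht, hΓ, trace_inv_mul_mul_inv_mul_smul_sub N C c ht.isUnit]

theorem hasDerivAt_apply (hΓ : ∀ t, Γ t = (A + t • N)⁻¹)
    (hB : ∀ t, B t = c • ((Γ t)⁻¹ - (Γ t)⁻¹ * C * (Γ t)⁻¹)) (ht : (A + t • N).det ≠ 0)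
    (i j : n) :
    HasDerivAt (fun s => B s i j) ((-(c • N - N * Γ t * B t - B t * Γ t * N)) i j) t := by
  have hB_nhds : (fun s => B s i j) =ᶠ[nhds t]
      fun s => (c • (A + s • N - (A + s • N) * C * (A + s • N))) i j := by
    filter_upwards [(isOpen_setOf_det_ne_zero A N).mem_nhds ht] with s hs
    rw [eq_smul_sub hΓ hB hs]
  rw [eq_smul_sub hΓ hB ht, hΓ, neg_riccati_rhs_eq N C c ht.isUnit]
  exact (hasDerivAt_smul_sub_mul_mul_apply A N C c t i j).congr_of_eventuallyEq hB_nhds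

theorem continuousOn_apply (hΓ : ∀ t, Γ t = (A + t • N)⁻¹)
    (hB : ∀ t, B t = c • ((Γ t)⁻¹ - (Γ t)⁻¹ * C * (Γ t)⁻¹)) (i j : n) :
    ContinuousOn (fun t => (-(c • N - N * Γ t * B t - B t * Γ t * N)) i j)
      {t : ℝ | (A + t • N).det ≠ 0} := by
  have hpoly : Continuous fun t : ℝ =>
      (c • (N - (N * C * (A + t • N) + (A + t • N) * C * N))) i j := by
    fun_prop
  refine hpoly.continuousOn.congr fun t ht => ?_
  rw [eq_smul_sub hΓ hB ht, hΓ, neg_riccati_rhs_eq N C c ht.isUnit]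

theorem isSymm (hA : A.IsSymm) (hN : N.IsSymm) (hC : C.IsSymm) (hΓ : ∀ t, Γ t = (A + t • N)⁻¹)
    (hB : ∀ t, B t = c • ((Γ t)⁻¹ - (Γ t)⁻¹ * C * (Γ t)⁻¹)) (ht : (A + t • N).det ≠ 0) :
    (B t).IsSymm := by
  have hM : (A + t • N).IsSymm := hA.add (hN.smul t)
  rw [eq_smul_sub hΓ hB ht]
  exact (hM.sub (hM.mul_mul_self hC)).smul c

theorem eq_zero_of_eq_Γ (hΓ : ∀ t, Γ t = (A + t • N)⁻¹)
    (hB : ∀ t, B t = c • ((Γ t)⁻¹ - (Γ t)⁻¹ * C * (Γ t)⁻¹)) (ht : (A + t • N).det ≠ 0)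
    (hC : C = Γ t) : B t = 0 := by
  rw [hB, hC, nonsing_inv_mul _ (by rw [hΓ]; exact isUnit_nonsing_inv_det _ ht.isUnit),
    Matrix.one_mul, sub_self, smul_zero]

end Riccati

theorem stmt14_general
    (T γ : ℝ) (hT : 0 < T)
    (d : ℕ)
    (Sm G0 : Matrix (Fin d) (Fin d) ℝ) (hSm : Sm.PosDef) (hG0 : G0.PosDef)
    (Γ : ℝ → Matrix (Fin d) (Fin d) ℝ)
    (hΓ : ∀ t, Γ t = (G0⁻¹ + t • Sm⁻¹)⁻¹)
    (a : ℝ → ℝ) (B : ℝ → Matrix (Fin d) (Fin d) ℝ)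
    (ha : ∀ t, a t = (1/(2*γ)) * ∫ s in t..T, Matrix.trace (Sm⁻¹ * (Γ s - Γ T)))
    (hB : ∀ t, B t = (1/γ) • ((Γ t)⁻¹ - (Γ t)⁻¹ * Γ T * (Γ t)⁻¹)) :
    -- a ∈ C¹([0,T]) and B is a C¹ symmetric-matrix-valued function on [0,T],
    -- and they satisfy the ODE system
    (∀ t ∈ Icc (0:ℝ) T,
      HasDerivAt a (-((1/2) * Matrix.trace (Γ t * Sm⁻¹ * Γ t * B t))) t
      ∧ (∀ i j, HasDerivAt (fun s => B s i j)
          ((-((1/γ) • Sm⁻¹ - Sm⁻¹ * Γ t * B t - B t * Γ t * Sm⁻¹)) i j) t)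
      ∧ (B t).IsSymm)
    -- the derivative functions are continuous on [0,T]
    ∧ ContinuousOn (fun t => -((1/2) * Matrix.trace (Γ t * Sm⁻¹ * Γ t * B t))) (Icc 0 T)
    ∧ (∀ i j, ContinuousOn
        (fun t => (-((1/γ) • Sm⁻¹ - Sm⁻¹ * Γ t * B t - B t * Γ t * Sm⁻¹)) i j) (Icc 0 T))
    -- terminal conditions
    ∧ a T = 0 ∧ B T = 0 := by
  set U := {t : ℝ | (G0⁻¹ + t • Sm⁻¹).det ≠ 0}
  have hIccU : Icc 0 T ⊆ U := fun t ht =>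
    (hG0.inv.add_smul_posSemidef hSm.inv.posSemidef ht.1).det_pos.ne'
  have hsymm {X : Matrix (Fin d) (Fin d) ℝ} (hX : X.PosDef) : X⁻¹.IsSymm :=
    isHermitian_iff_isSymm.mp hX.inv.isHermitian
  have hint : ContinuousOn (fun s => trace (Sm⁻¹ * (Γ s - Γ T))) U := by
    have := Riccati.continuousOn_inv hΓ
    fun_prop
  have hda : ∀ t ∈ U, -((1/2) * trace (Γ t * Sm⁻¹ * Γ t * B t))
      = 1/(2*γ) * -trace (Sm⁻¹ * (Γ t - Γ T)) := fun t ht => by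
    rw [Riccati.trace_eq hΓ hB ht]
    ring
  refine ⟨fun t ht => ⟨?_, Riccati.hasDerivAt_apply hΓ hB (hIccU ht), ?_⟩,
    (hint.mono hIccU).neg.const_mul _ |>.congr fun t ht => hda t (hIccU ht),
    fun i j => (Riccati.continuousOn_apply hΓ hB i j).mono hIccU,
    by simp [ha], Riccati.eq_zero_of_eq_Γ hΓ hB (hIccU ⟨hT.le, le_rfl⟩) rfl⟩
  · rw [funext ha, hda t (hIccU ht)]
    refine (intervalIntegral.hasDerivAt_integral_left_of_continuousOn
      (Riccati.isOpen_setOf_det_ne_zero _ _) hint ?_).const_mul _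
    rw [uIcc_of_le ht.2]
    exact (Icc_subset_Icc_left ht.1).trans hIccU
  · have hC : (Γ T).IsSymm := by
      rw [hΓ]
      exact hsymm (hG0.inv.add_smul_posSemidef hSm.inv.posSemidef hT.le)
    exact Riccati.isSymm (hsymm hG0) (hsymm hSm) hC hΓ hB (hIccU ht)

theorem stmt14
    (T γ : ℝ) (hT : 0 < T) (hγ : 0 < γ)
    (d : ℕ) (hd : 1 ≤ d)
    (Sm G0 : Matrix (Fin d) (Fin d) ℝ) (hSm : Sm.PosDef) (hG0 : G0.PosDef)
    (Γ : ℝ → Matrix (Fin d) (Fin d) ℝ)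
    (hΓ : ∀ t, Γ t = (G0⁻¹ + t • Sm⁻¹)⁻¹)
    (a : ℝ → ℝ) (B : ℝ → Matrix (Fin d) (Fin d) ℝ)
    (ha : ∀ t, a t = (1/(2*γ)) * ∫ s in t..T, Matrix.trace (Sm⁻¹ * (Γ s - Γ T)))
    (hB : ∀ t, B t = (1/γ) • ((Γ t)⁻¹ - (Γ t)⁻¹ * Γ T * (Γ t)⁻¹)) :
    -- a ∈ C¹([0,T]) and B is a C¹ symmetric-matrix-valued function on [0,T],
    -- and they satisfy the ODE system
    (∀ t ∈ Icc (0:ℝ) T,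
      HasDerivAt a (-((1/2) * Matrix.trace (Γ t * Sm⁻¹ * Γ t * B t))) t
      ∧ (∀ i j, HasDerivAt (fun s => B s i j)
          ((-((1/γ) • Sm⁻¹ - Sm⁻¹ * Γ t * B t - B t * Γ t * Sm⁻¹)) i j) t)
      ∧ (B t).IsSymm)
    -- the derivative functions are continuous on [0,T]
    ∧ ContinuousOn (fun t => -((1/2) * Matrix.trace (Γ t * Sm⁻¹ * Γ t * B t))) (Icc 0 T)
    ∧ (∀ i j, ContinuousOn
        (fun t => (-((1/γ) • Sm⁻¹ - Sm⁻¹ * Γ t * B t - B t * Γ t * Sm⁻¹)) i j) (Icc 0 T))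
    -- terminal conditions
    ∧ a T = 0 ∧ B T = 0 :=
  stmt14_general T γ hT d Sm G0 hSm hG0 Γ hΓ a B ha hB
end
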